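/- arXiv:2410.14463 — 2 statements merged into one kernel-verified Lean document; each statement's English description precedes it below -/
import Mathlib

section
/- Every n-qubit Pauli assignment (for any n) of the two-spread hypergram S_{2s} = (V_{2s}, H_{2s}, G_{2s}) has contextuality degree 1. -/
open scoped Classical
open Matrix

noncomputable section

/-- The space of `n`-qubit operators, realized as matrices indexed by
`Fin n → Fin 2` (the `n`-fold tensor-product index). -/
abbrev QMat (n : ℕ) := Matrix (Fin n → Fin 2) (Fin n → Fin 2) ℂ

/-- The four Pauli matrices `I, X, Y, Z`. -/
def pauliMat : Fin 4 → Matrix (Fin 2) (Fin 2) ℂ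
  | ⟨0, _⟩ => 1
  | ⟨1, _⟩ => !![0, 1; 1, 0]
  | ⟨2, _⟩ => !![0, -Complex.I; Complex.I, 0]
  | ⟨3, _⟩ => !![1, 0; 0, -1]

/-- The `n`-fold Kronecker (tensor) product `G₁ ⊗ ⋯ ⊗ Gₙ` of the Pauli matrices
selected by `g : Fin n → Fin 4`, as a matrix indexed by `Fin n → Fin 2`. -/
def nPauli {n : ℕ} (g : Fin n → Fin 4) : QMat n :=
  Matrix.of fun r c => ∏ k, pauliMat (g k) (r k) (c k)

/-- `M` is an `n`-qubit Pauli observable. -/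
def IsPauliObs (n : ℕ) (M : QMat n) : Prop := ∃ g : Fin n → Fin 4, M = nPauli g

/-- `I^⊗n`, the `n`-fold tensor product of the identity. -/
def idN (n : ℕ) : QMat n := nPauli (fun _ => ⟨0, by omega⟩)

/-- Product of `f` over a finite set of naturals, taken in increasing order
(well-defined without commutativity; agrees with the unordered product when the
factors pairwise commute). -/
def natFinsetProd {M : Type*} [Monoid M] (s : Finset ℕ) (f : ℕ → M) : M :=
  ((s.sort (· ≤ ·)).map f).prod

/-- `(V,H,G)` is a hypergram: `V` a nonempty finite vertex set, `H` a set of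
nonempty hyperedges covering `V`, `G` a set of 2-element edges on `V` forming a
simple reduced graph, no edge of `G` being contained in a hyperedge of `H`. -/
def IsHypergram (V : Finset ℕ) (H G : Finset (Finset ℕ)) : Prop :=
  V.Nonempty ∧
  (∀ h ∈ H, h ⊆ V ∧ h.Nonempty) ∧
  (∀ v ∈ V, ∃ h ∈ H, v ∈ h) ∧
  (∀ e ∈ G, e ⊆ V ∧ e.card = 2) ∧
  (∀ v ∈ V, ∃ e ∈ G, v ∈ e) ∧
  (∀ v ∈ V, ∀ w ∈ V,
    (∀ u ∈ V, (({v, u} : Finset ℕ) ∈ G ↔ ({w, u} : Finset ℕ) ∈ G)) → v = w) ∧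
  (∀ e ∈ G, ∀ h ∈ H, ¬ e ⊆ h)

/-- `α` is an `n`-qubit Pauli assignment of the hypergram `(V,H,G)`. -/
def IsPauliAssignment (V : Finset ℕ) (H G : Finset (Finset ℕ)) (n : ℕ)
    (α : ℕ → QMat n) : Prop :=
  (∀ v ∈ V, IsPauliObs n (α v)) ∧
  (∀ v ∈ V, α v ≠ idN n) ∧
  (∀ v₁ ∈ V, ∀ v₂ ∈ V, α v₁ = α v₂ → v₁ = v₂) ∧
  (∀ v₁ ∈ V, ∀ v₂ ∈ V, v₁ ≠ v₂ →
    (α v₁ * α v₂ = -(α v₂ * α v₁) ↔ ({v₁, v₂} : Finset ℕ) ∈ G)) ∧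
  (∀ h ∈ H, natFinsetProd h α = idN n ∨ natFinsetProd h α = -(idN n))

/-- The sign `sgn_α(h) ∈ {−1,1}` of a hyperedge `h`: `∏_{v∈h} α(v) = sgn_α(h)·I^⊗n`. -/
def quantumSgn {n : ℕ} (α : ℕ → QMat n) (h : Finset ℕ) : ℤ :=
  if natFinsetProd h α = idN n then 1 else -1

/-- The sign `sgn_a(h) = ∏_{v∈h} a(v)` of a hyperedge for a classical assignment. -/
def classicalSgn (a : ℕ → ℤ) (h : Finset ℕ) : ℤ := ∏ v ∈ h, a v

/-- The contextuality degree of a Pauli assignment: the minimum over classical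
assignments `a : V → {−1,1}` of the number of hyperedges whose signs differ. -/
def contextualityDegree {n : ℕ} (H : Finset (Finset ℕ)) (α : ℕ → QMat n) : ℕ :=
  sInf { d : ℕ | ∃ a : ℕ → ℤ, (∀ v, a v = 1 ∨ a v = -1) ∧
    d = (H.filter (fun h => quantumSgn α h ≠ classicalSgn a h)).card }

/-- The context (incidence) matrix of a hypergram over 𝔽₂. -/
def contextMatrix (V : Finset ℕ) (H : Finset (Finset ℕ)) :
    Matrix {h // h ∈ H} {v // v ∈ V} (ZMod 2) :=
  Matrix.of fun h v => if v.1 ∈ h.1 then 1 else 0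

/-- The anticommutation (adjacency) matrix of a hypergram over 𝔽₂. -/
def anticommMatrix (V : Finset ℕ) (G : Finset (Finset ℕ)) :
    Matrix {v // v ∈ V} {v // v ∈ V} (ZMod 2) :=
  Matrix.of fun i j => if ({i.1, j.1} : Finset ℕ) ∈ G then 1 else 0

/-- The standard symplectic form on `𝔽₂^{2n}`:
`⟨x,y⟩ = Σ_{k=1}^{n} (x_{2k−1} y_{2k} + x_{2k} y_{2k−1})`. -/
def sympForm (n : ℕ) (x y : Fin (2 * n) → ZMod 2) : ZMod 2 :=
  ∑ k : Fin n,
    (x ⟨2 * k.1, by have := k.2; omega⟩ * y ⟨2 * k.1 + 1, by have := k.2; omega⟩ +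
     x ⟨2 * k.1 + 1, by have := k.2; omega⟩ * y ⟨2 * k.1, by have := k.2; omega⟩)

/-- The single-qubit encoding `ψ(I)=(0,0), ψ(X)=(0,1), ψ(Y)=(1,1), ψ(Z)=(1,0)`. -/
def psi4 : Fin 4 → (ZMod 2) × (ZMod 2)
  | ⟨0, _⟩ => (0, 0)
  | ⟨1, _⟩ => (0, 1)
  | ⟨2, _⟩ => (1, 1)
  | ⟨3, _⟩ => (1, 0)

/-- The encoding `ψ` of an `n`-qubit Pauli observable (given by its tensor
factors `g`) as a vector of `𝔽₂^{2n}`, concatenating the per-factor encodings. -/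
def psiVec {n : ℕ} (g : Fin n → Fin 4) : Fin (2 * n) → ZMod 2 := fun idx =>
  if idx.1 % 2 = 0 then (psi4 (g ⟨idx.1 / 2, by have := idx.2; omega⟩)).1
  else (psi4 (g ⟨idx.1 / 2, by have := idx.2; omega⟩)).2

/-- All pairs of elements of `S` commute. -/
def PairComm {n : ℕ} (S : Finset (QMat n)) : Prop := ∀ a ∈ S, ∀ b ∈ S, a * b = b * a

/-- The (well-defined) product of a finite set of pairwise commuting matrices. -/
def commProd {n : ℕ} (S : Finset (QMat n)) (h : PairComm S) : QMat n :=
  S.noncommProd id (fun a ha b hb _ => h a ha b hb)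

/-- Pairwise commutation is inherited by subsets. -/
def pairCommOfSubset {n : ℕ} {S T : Finset (QMat n)} (hST : S ⊆ T) (h : PairComm T) :
    PairComm S := fun a ha b hb => h a (hST ha) b (hST hb)

/-- `Q` (pairwise commuting) is independent: no nonempty subset has product `±I^⊗n`. -/
def IsIndep {n : ℕ} (Q : Finset (QMat n)) (hQ : PairComm Q) : Prop :=
  ∀ S : Finset (QMat n), ∀ (hS : S ⊆ Q), S.Nonempty →
    commProd S (pairCommOfSubset hS hQ) ≠ idN n ∧
    commProd S (pairCommOfSubset hS hQ) ≠ -(idN n)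

/-- The vertex set `{1, …, 15}`. -/
def V15 : Finset ℕ := Finset.Icc 1 15

/-- The 15 lines of the doily. -/
def doilyLines : Finset (Finset ℕ) :=
  { {1,2,3}, {1,8,9}, {1,10,11}, {2,4,6}, {2,5,7}, {3,12,15}, {3,13,14},
    {4,8,12}, {4,10,14}, {5,8,13}, {5,10,15}, {6,9,15}, {6,11,13},
    {7,9,14}, {7,11,12} }

/-- The 10 lines of the two-spread `H_{2s}`. -/
def twoSpreadLines : Finset (Finset ℕ) :=
  { {1,2,3}, {1,10,11}, {2,4,6}, {3,13,14}, {4,8,12}, {5,8,13}, {5,10,15},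
    {6,9,15}, {7,9,14}, {7,11,12} }

/-- The anticommutation graph `G_d = G_{2s}`: pairs of distinct vertices not on a
common doily line. -/
def doilyG : Finset (Finset ℕ) :=
  (V15.powersetCard 2).filter (fun e => ∀ h ∈ doilyLines, ¬ e ⊆ h)


/-!
Every point of the two-spread lies on exactly two of its ten lines. Multiplying the ten line
operators and reordering the thirty factors so that equal observables become adjacent cancels
all of them; the reordering crosses an odd number of anticommuting pairs, so the quantum line
signs multiply to `-1`. For a classical assignment the line signs multiply to `∏ a(v)² = 1`,
so at least one line is always violated. Conversely, the point–line incidence graph of the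
two-spread is connected, so every pattern of line signs with product `1` is classically
realisable; flipping the quantum sign of a single line yields such a pattern.
-/

section PiKron

variable {ι m R : Type*} [Fintype ι] [CommSemiring R]

def piKron (A : ι → Matrix m m R) : Matrix (ι → m) (ι → m) R :=
  Matrix.of fun r c => ∏ k, A k (r k) (c k)

theorem piKron_mul [DecidableEq ι] [Fintype m] (A B : ι → Matrix m m R) :
    piKron A * piKron B = piKron fun k => A k * B k := by
  ext r c
  simp only [piKron, Matrix.mul_apply, Matrix.of_apply]
  rw [Finset.prod_univ_sum, Fintype.piFinset_univ]
  exact Finset.sum_congr rfl fun _ _ => Finset.prod_mul_distrib.symm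

theorem piKron_one [DecidableEq m] : piKron (fun _ : ι => (1 : Matrix m m R)) = 1 := by
  ext r c
  by_cases hrc : r = c
  · subst hrc
    simp [piKron]
  · obtain ⟨k, hk⟩ := Function.ne_iff.mp hrc
    simp only [piKron, Matrix.of_apply, Matrix.one_apply_ne hrc]
    exact Finset.prod_eq_zero (Finset.mem_univ k) (Matrix.one_apply_ne hk)

theorem piKron_smul (c : ι → R) (A : ι → Matrix m m R) :
    piKron (fun k => c k • A k) = (∏ k, c k) • piKron A := by
  ext r s
  simp [piKron, Finset.prod_mul_distrib]

end PiKron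

theorem Matrix.intCast_injective {m R : Type*} [DecidableEq m] [Nonempty m] [Ring R]
    [CharZero R] : Function.Injective (Int.cast : ℤ → Matrix m m R) := by
  intro a b hab
  obtain ⟨i⟩ := ‹Nonempty m›
  simpa [Matrix.intCast_apply] using congrFun (congrFun hab i) i

theorem pauliMat_mul_self (a : Fin 4) : pauliMat a * pauliMat a = 1 := by
  fin_cases a <;> ext i j <;> fin_cases i <;> fin_cases j <;>
    simp [pauliMat, Matrix.mul_apply, Fin.sum_univ_two]

theorem exists_pauliMat_mul_comm_eq_smul (a b : Fin 4) :
    ∃ c : ℂ, (c = 1 ∨ c = -1) ∧ pauliMat a * pauliMat b = c • (pauliMat b * pauliMat a) := by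
  refine ⟨if a = 0 ∨ b = 0 ∨ a = b then 1 else -1, by split_ifs <;> simp, ?_⟩
  fin_cases a <;> fin_cases b <;> ext i j <;> fin_cases i <;> fin_cases j <;>
    simp [pauliMat, Matrix.mul_apply, Fin.sum_univ_two]

theorem idN_eq_one (n : ℕ) : idN n = 1 :=
  piKron_one

theorem nPauli_mul_self {n : ℕ} (g : Fin n → Fin 4) : nPauli g * nPauli g = 1 := by
  change piKron _ * piKron _ = 1
  simp only [piKron_mul, pauliMat_mul_self]
  exact piKron_one

theorem nPauli_commute_or_anticommute {n : ℕ} (g g' : Fin n → Fin 4) :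
    nPauli g * nPauli g' = nPauli g' * nPauli g ∨
      nPauli g * nPauli g' = -(nPauli g' * nPauli g) := by
  choose c hc hcomm using fun k => exists_pauliMat_mul_comm_eq_smul (g k) (g' k)
  have hprod : nPauli g * nPauli g' = (∏ k, c k) • (nPauli g' * nPauli g) := by
    change piKron _ * piKron _ = (∏ k, c k) • (piKron _ * piKron _)
    simp only [piKron_mul, hcomm, piKron_smul]
  have hsign : ∏ k, c k = 1 ∨ ∏ k, c k = -1 :=
    Finset.prod_induction _ (fun x => x = 1 ∨ x = -1)
      (by rintro x y (rfl | rfl) (rfl | rfl) <;> simp) (Or.inl rfl) fun k _ => hc k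
  rcases hsign with h | h <;> simp [hprod, h]

def commSign (G : Finset (Finset ℕ)) (v w : ℕ) : ℤ := if {v, w} ∈ G then -1 else 1

namespace IsPauliAssignment

variable {V : Finset ℕ} {H G : Finset (Finset ℕ)} {n : ℕ} {α : ℕ → QMat n}

theorem mul_self (hα : IsPauliAssignment V H G n α) {v : ℕ} (hv : v ∈ V) :
    α v * α v = 1 := by
  obtain ⟨g, hg⟩ := hα.1 v hv
  rw [hg, nPauli_mul_self]

theorem mul_comm_eq_commSign_smul (hα : IsPauliAssignment V H G n α) {v w : ℕ}
    (hv : v ∈ V) (hw : w ∈ V) (hvw : v ≠ w) :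
    α v * α w = commSign G v w • (α w * α v) := by
  have hanti := hα.2.2.2.1 v hv w hw hvw
  unfold commSign
  split_ifs with hG
  · rw [neg_smul, one_smul]
    exact hanti.2 hG
  · obtain ⟨g, hg⟩ := hα.1 v hv
    obtain ⟨g', hg'⟩ := hα.1 w hw
    rw [one_smul]
    refine (nPauli_commute_or_anticommute g g').elim (fun h => hg ▸ hg' ▸ h) fun h => ?_
    exact absurd (hanti.1 (hg ▸ hg' ▸ h)) hG

theorem natFinsetProd_eq_quantumSgn (hα : IsPauliAssignment V H G n α) {h : Finset ℕ}
    (hh : h ∈ H) : natFinsetProd h α = quantumSgn α h := by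
  unfold quantumSgn
  split_ifs with h1
  · rw [h1, idN_eq_one, Int.cast_one]
  · rw [(hα.2.2.2.2 h hh).resolve_left h1, idN_eq_one, Int.cast_neg, Int.cast_one]

end IsPauliAssignment

theorem quantumSgn_eq_one_or {n : ℕ} (α : ℕ → QMat n) (h : Finset ℕ) :
    quantumSgn α h = 1 ∨ quantumSgn α h = -1 := by
  unfold quantumSgn
  split_ifs <;> simp

section Sorting

variable {M : Type*} [Ring M] (G : Finset (Finset ℕ))

def insertSign (a : ℕ) : List ℕ → ℤ
  | [] => 1
  | b :: l => if a ≤ b then 1 else commSign G a b * insertSign a l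

def sortSign : List ℕ → ℤ
  | [] => 1
  | a :: l => sortSign l * insertSign G a (l.insertionSort (· ≤ ·))

variable {G} {V : Finset ℕ} {α : ℕ → M}
  (hcomm : ∀ v ∈ V, ∀ w ∈ V, v ≠ w → α v * α w = commSign G v w • (α w * α v))
include hcomm

theorem mul_prod_map_eq_insertSign_smul {a : ℕ} (ha : a ∈ V) :
    ∀ l : List ℕ, (∀ x ∈ l, x ∈ V) →
      α a * (l.map α).prod = insertSign G a l • ((l.orderedInsert (· ≤ ·) a).map α).prod
  | [], _ => by simp [insertSign]
  | b :: l, hl => by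
    by_cases hab : a ≤ b
    · simp [insertSign, hab]
    · have hb : b ∈ V := hl b List.mem_cons_self
      have ih := mul_prod_map_eq_insertSign_smul ha l fun x hx => hl x (List.mem_cons_of_mem b hx)
      simp only [List.orderedInsert, hab, if_false, insertSign, List.map_cons, List.prod_cons]
      rw [← mul_assoc, hcomm a ha b hb (by omega), smul_mul_assoc, mul_assoc, ih,
        mul_smul_comm, smul_smul]

theorem prod_map_eq_sortSign_smul :
    ∀ l : List ℕ, (∀ x ∈ l, x ∈ V) →
      (l.map α).prod = sortSign G l • ((l.insertionSort (· ≤ ·)).map α).prod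
  | [], _ => by simp [sortSign]
  | a :: l, hl => by
    have ha : a ∈ V := hl a List.mem_cons_self
    have hlV : ∀ x ∈ l, x ∈ V := fun x hx => hl x (List.mem_cons_of_mem a hx)
    simp only [List.map_cons, List.prod_cons, List.insertionSort_cons, sortSign]
    rw [prod_map_eq_sortSign_smul l hlV, mul_smul_comm,
      mul_prod_map_eq_insertSign_smul hcomm ha _
        fun x hx => hlV x ((List.mem_insertionSort _).1 hx),
      smul_smul]

end Sorting

theorem prod_map_flatMap_pair_eq_one {M : Type*} [Monoid M] {α : ℕ → M} :
    ∀ l : List ℕ, (∀ v ∈ l, α v * α v = 1) → ((l.flatMap fun v => [v, v]).map α).prod = 1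
  | [], _ => rfl
  | v :: l, hl => by
    rw [List.flatMap_cons, List.map_append, List.prod_append,
      prod_map_flatMap_pair_eq_one l fun w hw => hl w (List.mem_cons_of_mem v hw)]
    simpa using hl v List.mem_cons_self

theorem natFinsetProd_toFinset {M : Type*} [Monoid M] (α : ℕ → M) {l : List ℕ}
    (hl : l.Pairwise (· < ·)) : natFinsetProd l.toFinset α = (l.map α).prod := by
  rw [natFinsetProd, (List.toFinset_sort _ hl.nodup).2 (hl.imp le_of_lt)]

theorem prod_map_flatten_eq_prod_natFinsetProd {M : Type*} [Monoid M] (α : ℕ → M)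
    {L : List (List ℕ)} (hL : ∀ l ∈ L, l.Pairwise (· < ·)) :
    (L.flatten.map α).prod = (L.map fun l => natFinsetProd l.toFinset α).prod := by
  rw [List.map_flatten, List.prod_flatten, List.map_map]
  exact congrArg List.prod
    (List.map_congr_left fun l hl => (natFinsetProd_toFinset α (hL l hl)).symm)

def twoSpreadLineList : List (List ℕ) :=
  [[1,2,3], [1,10,11], [2,4,6], [3,13,14], [4,8,12], [5,8,13], [5,10,15],
    [6,9,15], [7,9,14], [7,11,12]]

theorem pairwise_lt_of_mem_twoSpreadLineList :
    ∀ l ∈ twoSpreadLineList, l.Pairwise (· < ·) := by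
  decide

theorem toFinset_mem_twoSpreadLines :
    ∀ l ∈ twoSpreadLineList, l.toFinset ∈ twoSpreadLines := by
  decide

theorem prod_twoSpreadLines {M : Type*} [CommMonoid M] (f : Finset ℕ → M) :
    ∏ h ∈ twoSpreadLines, f h = (twoSpreadLineList.map fun l => f l.toFinset).prod := by
  have hlines : (twoSpreadLineList.map List.toFinset).toFinset = twoSpreadLines := by decide
  have hnodup : (twoSpreadLineList.map List.toFinset).Nodup := by decide
  rw [← hlines, List.prod_toFinset f hnodup, List.map_map]
  rfl

theorem mem_V15_of_mem_flatten_twoSpreadLineList :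
    ∀ v ∈ twoSpreadLineList.flatten, v ∈ V15 := by
  decide

theorem insertionSort_flatten_twoSpreadLineList :
    twoSpreadLineList.flatten.insertionSort (· ≤ ·) =
      (List.range' 1 15).flatMap fun v => [v, v] := by
  decide

theorem sortSign_flatten_twoSpreadLineList :
    sortSign doilyG twoSpreadLineList.flatten = -1 := by
  decide

theorem IsPauliAssignment.prod_quantumSgn_twoSpread {n : ℕ} {α : ℕ → QMat n}
    (hα : IsPauliAssignment V15 twoSpreadLines doilyG n α) :
    ∏ h ∈ twoSpreadLines, quantumSgn α h = -1 := by
  apply Matrix.intCast_injective (m := Fin n → Fin 2) (R := ℂ)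
  calc ((∏ h ∈ twoSpreadLines, quantumSgn α h : ℤ) : QMat n)
      = (twoSpreadLineList.flatten.map α).prod := by
        rw [prod_map_flatten_eq_prod_natFinsetProd α pairwise_lt_of_mem_twoSpreadLineList,
          prod_twoSpreadLines, Int.cast_list_prod, List.map_map]
        refine congrArg List.prod (List.map_congr_left fun l hl => ?_)
        exact (hα.natFinsetProd_eq_quantumSgn (toFinset_mem_twoSpreadLines l hl)).symm
    _ = sortSign doilyG twoSpreadLineList.flatten •
          ((twoSpreadLineList.flatten.insertionSort (· ≤ ·)).map α).prod :=
        prod_map_eq_sortSign_smul (fun v hv w hw => hα.mul_comm_eq_commSign_smul hv hw) _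
          mem_V15_of_mem_flatten_twoSpreadLineList
    _ = ((-1 : ℤ) : QMat n) := by
        rw [sortSign_flatten_twoSpreadLineList, insertionSort_flatten_twoSpreadLineList,
          prod_map_flatMap_pair_eq_one _ fun v hv => hα.mul_self ?_]
        · simp
        · rw [V15, Finset.mem_Icc]
          simp only [List.mem_range'] at hv
          omega

theorem prod_classicalSgn_twoSpread {a : ℕ → ℤ} (ha : ∀ v, a v = 1 ∨ a v = -1) :
    ∏ h ∈ twoSpreadLines, classicalSgn a h = 1 := by
  have hline (l : List ℕ) (hl : l.Pairwise (· < ·)) :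
      classicalSgn a l.toFinset = natFinsetProd l.toFinset a := by
    rw [natFinsetProd_toFinset a hl, classicalSgn, List.prod_toFinset a hl.nodup]
  calc ∏ h ∈ twoSpreadLines, classicalSgn a h
      = (twoSpreadLineList.flatten.map a).prod := by
        rw [prod_twoSpreadLines,
          prod_map_flatten_eq_prod_natFinsetProd a pairwise_lt_of_mem_twoSpreadLineList]
        exact congrArg List.prod (List.map_congr_left fun l hl =>
          hline l (pairwise_lt_of_mem_twoSpreadLineList l hl))
    _ = ((twoSpreadLineList.flatten.insertionSort (· ≤ ·)).map a).prod :=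
        ((List.perm_insertionSort _ _).map a).prod_eq.symm
    _ = 1 := by
        rw [insertionSort_flatten_twoSpreadLineList]
        exact prod_map_flatMap_pair_eq_one _ fun v _ => mul_self_eq_one_iff.2 (ha v)

theorem exists_classicalSgn_eq_twoSpread {t : Finset ℕ → ℤ} (ht : ∀ h, t h = 1 ∨ t h = -1)
    (hprod : ∏ h ∈ twoSpreadLines, t h = 1) :
    ∃ a : ℕ → ℤ, (∀ v, a v = 1 ∨ a v = -1) ∧
      ∀ h ∈ twoSpreadLines, classicalSgn a h = t h := by
  simp only [twoSpreadLines, Finset.forall_mem_insert, Finset.mem_singleton, forall_eq]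
  simp only [prod_twoSpreadLines, twoSpreadLineList, List.map_cons, List.map_nil,
    List.prod_cons, List.prod_nil, mul_one, List.toFinset_cons, List.toFinset_nil,
    insert_empty_eq] at hprod
  have s1 := sq_eq_one_iff.2 (ht {1,2,3}); have s2 := sq_eq_one_iff.2 (ht {1,10,11})
  have s3 := sq_eq_one_iff.2 (ht {2,4,6}); have s4 := sq_eq_one_iff.2 (ht {3,13,14})
  have s5 := sq_eq_one_iff.2 (ht {4,8,12}); have s6 := sq_eq_one_iff.2 (ht {5,8,13})
  have s7 := sq_eq_one_iff.2 (ht {5,10,15}); have s8 := sq_eq_one_iff.2 (ht {6,9,15})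
  have s9 := sq_eq_one_iff.2 (ht {7,9,14}); have s10 := sq_eq_one_iff.2 (ht {7,11,12})
  generalize t {1,2,3} = x1, t {1,10,11} = x2, t {2,4,6} = x3, t {3,13,14} = x4,
    t {4,8,12} = x5, t {5,8,13} = x6, t {5,10,15} = x7, t {6,9,15} = x8, t {7,9,14} = x9,
    t {7,11,12} = x10 at s1 s2 s3 s4 s5 s6 s7 s8 s9 s10 hprod ⊢
  -- Points 10–15 get sign 1; this fixes 1, 3, 5, 7 through the lines {1,10,11}, {3,13,14},
  -- {5,10,15}, {7,11,12}, then 8, 4, 9, 6, 2 through {5,8,13}, {4,8,12}, {7,9,14},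
  -- {6,9,15}, {2,4,6}. Only {1,2,3} is left, and there `hprod` is needed.
  refine ⟨fun v =>
    if v = 1 then x2 else if v = 3 then x4 else if v = 5 then x7 else if v = 7 then x10
    else if v = 8 then x6 * x7 else if v = 4 then x5 * x6 * x7
    else if v = 9 then x9 * x10 else if v = 6 then x8 * x9 * x10
    else if v = 2 then x3 * x5 * x6 * x7 * x8 * x9 * x10 else 1, fun v => ?_, ?_⟩
  · rw [← sq_eq_one_iff]
    beta_reduce
    split_ifs <;> ring_nf <;> simp [*]
  · simp only [classicalSgn, Finset.mem_insert, Finset.mem_singleton, Finset.prod_insert,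
      Finset.prod_singleton, OfNat.one_ne_ofNat, OfNat.ofNat_ne_one, Nat.reduceEqDiff,
      Nat.succ_ne_self, or_self, not_false_eq_true, ↓reduceIte, mul_one, and_true, true_and]
    refine ⟨?_, ?_, ?_, ?_, ?_, ?_⟩
    · linear_combination x1 * hprod - x2 * (x3 * x5 * x6 * x7 * x8 * x9 * x10 * x4) * s1
    all_goals ring_nf; simp [*]

theorem exists_quantumSgn_ne_classicalSgn_twoSpread {n : ℕ} {α : ℕ → QMat n}
    (hq : ∏ h ∈ twoSpreadLines, quantumSgn α h = -1) {a : ℕ → ℤ}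
    (ha : ∀ v, a v = 1 ∨ a v = -1) :
    ∃ h ∈ twoSpreadLines, quantumSgn α h ≠ classicalSgn a h := by
  by_contra! hall
  have hc := prod_classicalSgn_twoSpread ha
  rw [← Finset.prod_congr rfl hall, hq] at hc
  norm_num at hc

theorem exists_card_filter_quantumSgn_ne_classicalSgn_twoSpread_eq_one {n : ℕ}
    {α : ℕ → QMat n} (hq : ∏ h ∈ twoSpreadLines, quantumSgn α h = -1) :
    ∃ a : ℕ → ℤ, (∀ v, a v = 1 ∨ a v = -1) ∧
      (twoSpreadLines.filter fun h => quantumSgn α h ≠ classicalSgn a h).card = 1 := by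
  let t : Finset ℕ → ℤ := fun l => (if l = {1,2,3} then -1 else 1) * quantumSgn α l
  have ht (l : Finset ℕ) : t l = 1 ∨ t l = -1 := by
    simp only [t]
    rcases quantumSgn_eq_one_or α l with hl | hl <;> split_ifs <;> simp [hl]
  have hprod : ∏ l ∈ twoSpreadLines, t l = 1 := by
    rw [Finset.prod_mul_distrib, Finset.prod_ite_eq', hq]
    decide
  obtain ⟨a, ha, hat⟩ := exists_classicalSgn_eq_twoSpread ht hprod
  refine ⟨a, ha, Finset.card_eq_one.2 ⟨{1,2,3}, ?_⟩⟩
  ext l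
  simp only [Finset.mem_filter, Finset.mem_singleton]
  constructor
  · rintro ⟨hl, hne⟩
    by_contra h0
    simp [hat l hl, t, h0] at hne
  · rintro rfl
    have hmem : ({1,2,3} : Finset ℕ) ∈ twoSpreadLines := by decide
    refine ⟨hmem, ?_⟩
    rcases quantumSgn_eq_one_or α {1,2,3} with h1 | h1 <;> simp [hat _ hmem, t, h1]

theorem contextualityDegree_eq_one {n : ℕ} {H : Finset (Finset ℕ)} {α : ℕ → QMat n}
    (hpos : ∀ a : ℕ → ℤ, (∀ v, a v = 1 ∨ a v = -1) →
      ∃ h ∈ H, quantumSgn α h ≠ classicalSgn a h)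
    (hone : ∃ a : ℕ → ℤ, (∀ v, a v = 1 ∨ a v = -1) ∧
      (H.filter fun h => quantumSgn α h ≠ classicalSgn a h).card = 1) :
    contextualityDegree H α = 1 := by
  obtain ⟨a, ha, hcard⟩ := hone
  refine le_antisymm (Nat.sInf_le ⟨a, ha, hcard.symm⟩) (Nat.one_le_iff_ne_zero.2 fun h0 => ?_)
  rcases Nat.sInf_eq_zero.1 h0 with ⟨b, hb, hcard0⟩ | hempty
  · obtain ⟨h, hh, hne⟩ := hpos b hb
    exact (Finset.card_pos.2 ⟨h, Finset.mem_filter.2 ⟨hh, hne⟩⟩).ne' hcard0.symm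
  · exact (Set.eq_empty_iff_forall_notMem.1 hempty) 1 ⟨a, ha, hcard.symm⟩

/-- Every Pauli assignment of the two-spread hypergram
`S_{2s} = (V_{2s}, H_{2s}, G_{2s})` has contextuality degree 1. -/
theorem twoSpread_contextuality_degree_one
    (n : ℕ) (α : ℕ → QMat n)
    (h : IsPauliAssignment V15 twoSpreadLines doilyG n α) :
    contextualityDegree twoSpreadLines α = 1 := by
  have hq := h.prod_quantumSgn_twoSpread
  exact contextualityDegree_eq_one
    (fun _ ha => exists_quantumSgn_ne_classicalSgn_twoSpread hq ha)
    (exists_card_filter_quantumSgn_ne_classicalSgn_twoSpread_eq_one hq)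

end
end

section
/- Let h be a finite set of pairwise commuting n-qubit Pauli observables whose product satisfies ∏_{o∈h} o = I^⊗n or ∏_{o∈h} o = −I^⊗n. Then every n-qubit Pauli observable anticommutes with an even number of elements of h. -/
open scoped Classical
open Matrix

noncomputable section

/-! Pauli observables pairwise commute or anticommute, so moving `A` across the product `P`
of `h` one factor at a time gives `A P = (-1)^k P A`, with `k` the number of factors
anticommuting with `A`. As `P = ±I^⊗n` is central, `A = (-1)^k A`, and `A ≠ 0` forces `k`
even. -/

section SignedCommute

variable {ι M : Type*} [Monoid M] [HasDistribNeg M]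

theorem mul_noncommProd_eq_neg_one_pow_mul [DecidableEq M] (a : M) (s : Finset ι) (f : ι → M)
    (comm : (s : Set ι).Pairwise fun i j => Commute (f i) (f j))
    (hf : ∀ i ∈ s, a * f i = f i * a ∨ a * f i = -(f i * a)) :
    a * s.noncommProd f comm =
      (-1) ^ (s.filter fun i => a * f i = -(f i * a)).card * (s.noncommProd f comm * a) := by
  induction s using Finset.induction_on with
  | empty => simp
  | @insert j s hj ih =>
    rw [Finset.noncommProd_insert_of_notMem _ _ _ _ hj, Finset.filter_insert, ← mul_assoc]
    have ih' := ih (comm.mono fun _ => Finset.mem_insert_of_mem) fun i hi =>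
      hf i (Finset.mem_insert_of_mem hi)
    by_cases hanti : a * f j = -(f j * a)
    · rw [if_pos hanti, Finset.card_insert_of_notMem fun hmem => hj (Finset.mem_filter.1 hmem).1,
        hanti, neg_mul, mul_assoc, ih', pow_succ]
      simp only [mul_assoc, neg_mul, one_mul, mul_neg,
        ((Commute.neg_one_left _).pow_left _).left_comm]
    · have hcomm := (hf j (Finset.mem_insert_self j s)).resolve_right hanti
      rw [if_neg hanti, hcomm, mul_assoc, ih']
      simp only [mul_assoc, ((Commute.neg_one_left _).pow_left _).left_comm]

end SignedCommute

section PiKronecker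

variable {ι l m p R : Type*} [Fintype ι] [CommSemiring R]

def piKronecker (M : ι → Matrix l m R) : Matrix (ι → l) (ι → m) R :=
  Matrix.of fun r c => ∏ k, M k (r k) (c k)

theorem piKronecker_mul [DecidableEq ι] [Fintype m] (M : ι → Matrix l m R)
    (N : ι → Matrix m p R) :
    piKronecker M * piKronecker N = piKronecker fun k => M k * N k := by
  ext r c
  simp only [piKronecker, Matrix.mul_apply, Matrix.of_apply, ← Finset.prod_mul_distrib]
  rw [Finset.prod_univ_sum]
  rfl

theorem piKronecker_smul (a : ι → R) (M : ι → Matrix l m R) :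
    piKronecker (fun k => a k • M k) = (∏ k, a k) • piKronecker M := by
  ext r c
  simp [piKronecker, Finset.prod_mul_distrib]

theorem piKronecker_one [DecidableEq m] : piKronecker (fun _ : ι => (1 : Matrix m m R)) = 1 := by
  ext r c
  by_cases hrc : r = c
  · subst hrc
    simp [piKronecker]
  · obtain ⟨k, hk⟩ := Function.ne_iff.mp hrc
    simp only [piKronecker, Matrix.of_apply, Matrix.one_apply, if_neg hrc]
    exact Finset.prod_eq_zero (Finset.mem_univ k) (if_neg hk)

end PiKronecker

theorem exists_pauliMat_mul_eq_neg_one_pow_smul (a b : Fin 4) :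
    ∃ e : ℕ, pauliMat a * pauliMat b = (-1 : ℂ) ^ e • (pauliMat b * pauliMat a) := by
  refine ⟨if a = 0 ∨ b = 0 ∨ a = b then 0 else 1, ?_⟩
  fin_cases a <;> fin_cases b <;> ext i j <;> fin_cases i <;> fin_cases j <;>
    simp [pauliMat, Matrix.mul_apply, Fin.sum_univ_two]

theorem nPauli_eq_piKronecker {n : ℕ} (g : Fin n → Fin 4) :
    nPauli g = piKronecker fun k => pauliMat (g k) := rfl

namespace IsPauliObs

variable {n : ℕ} {A B : QMat n}

theorem mul_self (hA : IsPauliObs n A) : A * A = 1 := by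
  obtain ⟨g, rfl⟩ := hA
  rw [nPauli_eq_piKronecker, piKronecker_mul]
  simp only [pauliMat_mul_self, piKronecker_one]

theorem ne_zero (hA : IsPauliObs n A) : A ≠ 0 := fun h0 => by
  simpa [h0] using hA.mul_self

theorem commute_or_anticommute (hA : IsPauliObs n A) (hB : IsPauliObs n B) :
    A * B = B * A ∨ A * B = -(B * A) := by
  obtain ⟨g, rfl⟩ := hA
  obtain ⟨g', rfl⟩ := hB
  choose e he using fun k => exists_pauliMat_mul_eq_neg_one_pow_smul (g k) (g' k)
  have hsign : nPauli g * nPauli g' = (-1 : ℂ) ^ (∑ k, e k) • (nPauli g' * nPauli g) := by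
    rw [nPauli_eq_piKronecker, nPauli_eq_piKronecker, piKronecker_mul, piKronecker_mul]
    simp only [he, piKronecker_smul, Finset.prod_pow_eq_pow_sum]
  rcases neg_one_pow_eq_or ℂ (∑ k, e k) with h1 | h1 <;> simp [hsign, h1]

end IsPauliObs

/-- If a finite set `h` of pairwise commuting Pauli observables
has product `±I^⊗n`, then every Pauli observable anticommutes with an even
number of elements of `h`. -/
theorem even_anticommutations_with_context
    (n : ℕ) (h : Finset (QMat n))
    (hObs : ∀ o ∈ h, IsPauliObs n o)
    (hcomm : PairComm h)
    (hprod : commProd h hcomm = idN n ∨ commProd h hcomm = -(idN n))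
    (A : QMat n) (hA : IsPauliObs n A) :
    Even ((h.filter (fun o => A * o = -(o * A))).card) := by
  have hmove : A * commProd h hcomm =
      (-1) ^ (h.filter fun o => A * o = -(o * A)).card * (commProd h hcomm * A) :=
    mul_noncommProd_eq_neg_one_pow_mul A h id (fun a ha b hb _ => hcomm a ha b hb)
      fun o ho => hA.commute_or_anticommute (hObs o ho)
  have hfix : A = (-1) ^ (h.filter fun o => A * o = -(o * A)).card * A := by
    rcases hprod with hP | hP <;> simpa [hP, idN_eq_one] using hmove
  by_contra hodd
  rw [Nat.not_even_iff_odd.mp hodd |>.neg_one_pow, neg_one_mul] at hfix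
  exact hA.ne_zero ((self_eq_neg (G := (Fin n → Fin 2) → (Fin n → Fin 2) → ℂ)).mp hfix)
end
end
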